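/- arXiv:2108.05393 — 2 statements merged into one kernel-verified Lean document; each statement's English description precedes it below -/
import Mathlib

section
/- Let $q \in \mathbb{C}^\times$ with $|q| < 1$, $t \in \mathbb{C}^\times$, $n \geq 1$, $1 \leq r \leq n$. Define the Macdonald operator $M_r(\mathbf{z}|q,t) f(\mathbf{z}) = \sum_{|I|=r} \prod_{i \in I, j \notin I} \frac{t z_i - t^{-1} z_j}{z_i - z_j} \, f(\mathbf{z}^{(I)})$, where $\mathbf{z}^{(I)}$ multiplies $z_i$ by $q^2$ for $i \in I$, and let $\phi(\mathbf{z}) = \prod_{j \neq k} \frac{(q z_j/z_k; q^2)_\infty}{(q^2 t^{-2} z_j/z_k; q^2)_\infty}$. Then for any function $f$ on $(\mathbb{C}^\times)^n$ and any point $\mathbf{z}$ where all the relevant quantities are defined and nonzero, $M_r(\mathbf{z}|q,t)\big(\phi \cdot f\big)(\mathbf{z}) = \phi(\mathbf{z}) \cdot \big(M_r(\mathbf{z}|q, q t^{-1}) f\big)(\mathbf{z})$. -/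
open Finset

noncomputable section

/-- The infinite `q`-Pochhammer symbol `(z; q²)_∞ = ∏_{m≥0} (1 - z q^{2m})`. -/
def qPoch (q z : ℂ) : ℂ := ∏' m : ℕ, (1 - z * q ^ (2 * m))

/-- The point `z^{(I)}` obtained from `z` by multiplying `z_i` by `q²` for `i ∈ I`. -/
def shifted (q : ℂ) {n : ℕ} (I : Finset (Fin n)) (z : Fin n → ℂ) : Fin n → ℂ :=
  fun k => if k ∈ I then q ^ 2 * z k else z k

/-- The Macdonald operator `M_r(z|q,t)` acting on a function `f`. -/
def macdonaldOp (q t' : ℂ) (n r : ℕ) (f : (Fin n → ℂ) → ℂ) (z : Fin n → ℂ) : ℂ :=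
  ∑ I ∈ (univ : Finset (Fin n)).powersetCard r,
    (∏ i ∈ I, ∏ j ∈ univ \ I, (t' * z i - t'⁻¹ * z j) / (z i - z j)) *
      f (shifted q I z)

/-- The gauge function `φ(z) = ∏_{j ≠ k} (q z_j/z_k; q²)_∞ / (q² t⁻² z_j/z_k; q²)_∞`. -/
def gaugePhi (q t : ℂ) (n : ℕ) (z : Fin n → ℂ) : ℂ :=
  ∏ j : Fin n, ∏ k ∈ univ.erase j,
    qPoch q (q * z j / z k) / qPoch q (q ^ 2 * (t ^ 2)⁻¹ * z j / z k)

/-!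
Write `φ(z) = ∏_{j ≠ k} g(z_j, z_k)`. Shifting the variables indexed by `I` leaves `g(z_j, z_k)`
unchanged when `j` and `k` lie on the same side of `I`, so `φ(z^{(I)}) / φ(z)` is a product over
the cross pairs `i ∈ I`, `j ∉ I`. For each such pair the functional equation
`(w; q²)_∞ = (1 - w) (q² w; q²)_∞` makes that ratio rational, and multiplied by the kernel of
`M_r(z|q,t)` it becomes the kernel of `M_r(z|q,qt⁻¹)`.
-/

lemma multipliable_one_sub_mul_pow_two_mul {q : ℂ} (hq : ‖q‖ < 1) (w : ℂ) :
    Multipliable fun m : ℕ => 1 - w * q ^ (2 * m) := by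
  have hq2 : ‖q ^ 2‖ < 1 := by rw [norm_pow]; exact pow_lt_one₀ (norm_nonneg q) hq two_ne_zero
  simpa [sub_eq_add_neg, pow_mul] using Complex.multipliable_one_add_of_summable
    ((summable_geometric_of_norm_lt_one hq2).mul_left w).neg

lemma qPoch_eq_one_sub_mul_qPoch {q : ℂ} (hq : ‖q‖ < 1) (w : ℂ) :
    qPoch q w = (1 - w) * qPoch q (q ^ 2 * w) := by
  have hmul : Multipliable fun m : ℕ => 1 - w * q ^ (2 * (m + 1)) := by
    refine (multipliable_one_sub_mul_pow_two_mul hq (q ^ 2 * w)).congr fun m => ?_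
    ring
  rw [qPoch, qPoch, tprod_eq_zero_mul' (f := fun m : ℕ => 1 - w * q ^ (2 * m)) hmul]
  simp only [mul_zero, pow_zero, mul_one]
  congr 1
  exact tprod_congr fun m => by ring

lemma one_sub_ne_zero_of_qPoch_ne_zero {q w : ℂ} (hq : ‖q‖ < 1) (h : qPoch q w ≠ 0) :
    1 - w ≠ 0 :=
  left_ne_zero_of_mul (qPoch_eq_one_sub_mul_qPoch hq w ▸ h)

theorem Finset.prod_prod_erase_eq_prod_filter_mul_prod_prod_compl {ι M : Type*} [Fintype ι]
    [DecidableEq ι] [CommMonoid M] (I : Finset ι) (F : ι → ι → M) :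
    ∏ j, ∏ k ∈ univ.erase j, F j k =
      (∏ j, ∏ k ∈ univ.erase j with (j ∈ I ↔ k ∈ I), F j k) *
        ∏ i ∈ I, ∏ j ∈ Iᶜ, F i j * F j i := by
  have cross : ∀ j, ∏ k ∈ univ.erase j with ¬(j ∈ I ↔ k ∈ I), F j k =
      if j ∈ I then ∏ k ∈ Iᶜ, F j k else ∏ k ∈ I, F j k := by
    intro j
    split_ifs with hj <;> refine prod_congr ?_ fun _ _ => rfl <;> ext k <;>
      by_cases hk : k ∈ I <;> by_cases hjk : k = j <;> simp_all
  calc ∏ j, ∏ k ∈ univ.erase j, F j k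
      = ∏ j, ((∏ k ∈ univ.erase j with (j ∈ I ↔ k ∈ I), F j k) *
          ∏ k ∈ univ.erase j with ¬(j ∈ I ↔ k ∈ I), F j k) := by
        simp only [prod_filter_mul_prod_filter_not]
    _ = (∏ j, ∏ k ∈ univ.erase j with (j ∈ I ↔ k ∈ I), F j k) *
          ((∏ j ∈ I, ∏ k ∈ Iᶜ, F j k) * ∏ j ∈ Iᶜ, ∏ k ∈ I, F j k) := by
        rw [prod_mul_distrib]
        simp only [cross, prod_ite]
        congr 3 <;> ext <;> simp
    _ = _ := by
        rw [prod_comm (s := Iᶜ), ← prod_mul_distrib]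
        simp only [prod_mul_distrib]

section Shifted

variable {q : ℂ} {n : ℕ} {I : Finset (Fin n)} {z : Fin n → ℂ} {k : Fin n}

lemma shifted_of_mem (hk : k ∈ I) : shifted q I z k = q ^ 2 * z k := if_pos hk

lemma shifted_of_notMem (hk : k ∉ I) : shifted q I z k = z k := if_neg hk

end Shifted

def gaugeFactor (q t a b : ℂ) : ℂ :=
  qPoch q (q * a / b) / qPoch q (q ^ 2 * (t ^ 2)⁻¹ * a / b)

lemma gaugePhi_eq_prod_gaugeFactor (q t : ℂ) (n : ℕ) (z : Fin n → ℂ) :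
    gaugePhi q t n z = ∏ j, ∏ k ∈ univ.erase j, gaugeFactor q t (z j) (z k) := rfl

lemma gaugeFactor_mul_mul {q : ℂ} (hq0 : q ≠ 0) (t a b : ℂ) :
    gaugeFactor q t (q ^ 2 * a) (q ^ 2 * b) = gaugeFactor q t a b := by
  rw [gaugeFactor, gaugeFactor, mul_left_comm, mul_div_mul_left _ _ (pow_ne_zero 2 hq0),
    mul_left_comm _ (q ^ 2) a, mul_div_mul_left _ _ (pow_ne_zero 2 hq0)]

lemma gaugeFactor_eq_mul_gaugeFactor {q : ℂ} (hq : ‖q‖ < 1) (t a b : ℂ) :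
    gaugeFactor q t a b =
      (1 - q * a / b) / (1 - q ^ 2 * (t ^ 2)⁻¹ * a / b) * gaugeFactor q t (q ^ 2 * a) b := by
  rw [gaugeFactor, gaugeFactor, qPoch_eq_one_sub_mul_qPoch hq (q * a / b),
    qPoch_eq_one_sub_mul_qPoch hq (q ^ 2 * (t ^ 2)⁻¹ * a / b), mul_div_mul_comm]
  ring_nf

def macdonaldKernel (t' a b : ℂ) : ℂ := (t' * a - t'⁻¹ * b) / (a - b)

lemma macdonaldOp_eq_sum (q t' : ℂ) (n r : ℕ) (f : (Fin n → ℂ) → ℂ) (z : Fin n → ℂ) :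
    macdonaldOp q t' n r f z = ∑ I ∈ (univ : Finset (Fin n)).powersetCard r,
      (∏ i ∈ I, ∏ j ∈ Iᶜ, macdonaldKernel t' (z i) (z j)) * f (shifted q I z) := by
  simp only [compl_eq_univ_sdiff]
  rfl

lemma macdonaldKernel_mul_eq {q t a b : ℂ} (hq0 : q ≠ 0) (ht : t ≠ 0) (ha : a ≠ 0) (hb : b ≠ 0)
    (htab : t * a - t⁻¹ * b ≠ 0) (htba : 1 - q ^ 2 * (t ^ 2)⁻¹ * a / b ≠ 0) :
    macdonaldKernel t a b *
        ((1 - q * b / (q ^ 2 * a)) / (1 - q ^ 2 * (t ^ 2)⁻¹ * b / (q ^ 2 * a))) =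
      macdonaldKernel (q * t⁻¹) a b * ((1 - q * a / b) / (1 - q ^ 2 * (t ^ 2)⁻¹ * a / b)) := by
  have h₁ : t ^ 2 * a - b ≠ 0 := by
    contrapose! htab; field_simp; linear_combination htab
  have h₂ : t ^ 2 * b - a * q ^ 2 ≠ 0 := by
    contrapose! htba; field_simp; linear_combination htba
  rw [macdonaldKernel, macdonaldKernel, div_mul_eq_mul_div, div_mul_eq_mul_div]
  congr 1
  field_simp
  ring

lemma macdonaldKernel_mul_gaugeFactor_shift {q t a b : ℂ} (hq : ‖q‖ < 1) (hq0 : q ≠ 0)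
    (ht : t ≠ 0) (ha : a ≠ 0) (hb : b ≠ 0) (htab : t * a - t⁻¹ * b ≠ 0)
    (htba : 1 - q ^ 2 * (t ^ 2)⁻¹ * a / b ≠ 0) :
    macdonaldKernel t a b * (gaugeFactor q t (q ^ 2 * a) b * gaugeFactor q t b (q ^ 2 * a)) =
      macdonaldKernel (q * t⁻¹) a b * (gaugeFactor q t a b * gaugeFactor q t b a) := by
  rw [gaugeFactor_eq_mul_gaugeFactor hq t a b, gaugeFactor_eq_mul_gaugeFactor hq t b (q ^ 2 * a),
    gaugeFactor_mul_mul hq0]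
  linear_combination (gaugeFactor q t (q ^ 2 * a) b * gaugeFactor q t b a) *
    macdonaldKernel_mul_eq hq0 ht ha hb htab htba

lemma gaugePhi_shifted_mul {q : ℂ} (hq0 : q ≠ 0) (t : ℂ) {n : ℕ} (I : Finset (Fin n))
    (z : Fin n → ℂ) :
    gaugePhi q t n (shifted q I z) *
        ∏ i ∈ I, ∏ j ∈ Iᶜ, gaugeFactor q t (z i) (z j) * gaugeFactor q t (z j) (z i) =
      gaugePhi q t n z * ∏ i ∈ I, ∏ j ∈ Iᶜ,
        gaugeFactor q t (q ^ 2 * z i) (z j) * gaugeFactor q t (z j) (q ^ 2 * z i) := by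
  have same : ∏ j, ∏ k ∈ univ.erase j with (j ∈ I ↔ k ∈ I),
      gaugeFactor q t (shifted q I z j) (shifted q I z k) =
        ∏ j, ∏ k ∈ univ.erase j with (j ∈ I ↔ k ∈ I), gaugeFactor q t (z j) (z k) := by
    refine prod_congr rfl fun j _ => prod_congr rfl fun k hk => ?_
    by_cases hj : j ∈ I
    · have hk' : k ∈ I := ((mem_filter.1 hk).2).1 hj
      rw [shifted_of_mem hj, shifted_of_mem hk', gaugeFactor_mul_mul hq0]
    · have hk' : k ∉ I := fun hk' => hj (((mem_filter.1 hk).2).2 hk')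
      rw [shifted_of_notMem hj, shifted_of_notMem hk']
  have cross : ∏ i ∈ I, ∏ j ∈ Iᶜ, gaugeFactor q t (shifted q I z i) (shifted q I z j) *
        gaugeFactor q t (shifted q I z j) (shifted q I z i) =
      ∏ i ∈ I, ∏ j ∈ Iᶜ,
        gaugeFactor q t (q ^ 2 * z i) (z j) * gaugeFactor q t (z j) (q ^ 2 * z i) :=
    prod_congr rfl fun i hi => prod_congr rfl fun j hj => by
      rw [shifted_of_mem hi, shifted_of_notMem (mem_compl.1 hj)]
  rw [gaugePhi_eq_prod_gaugeFactor, gaugePhi_eq_prod_gaugeFactor,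
    prod_prod_erase_eq_prod_filter_mul_prod_prod_compl I,
    prod_prod_erase_eq_prod_filter_mul_prod_prod_compl I, same, cross]
  ring

lemma prod_macdonaldKernel_mul_gaugePhi_shifted {q t : ℂ} (hq : ‖q‖ < 1) (hq0 : q ≠ 0)
    (ht : t ≠ 0) {n : ℕ} {z : Fin n → ℂ} (hz : ∀ i, z i ≠ 0)
    (htz : ∀ i j, i ≠ j → t * z i - t⁻¹ * z j ≠ 0)
    (hpoch : ∀ j k, j ≠ k →
      qPoch q (q * z j / z k) ≠ 0 ∧ qPoch q (q ^ 2 * (t ^ 2)⁻¹ * z j / z k) ≠ 0)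
    (I : Finset (Fin n)) :
    (∏ i ∈ I, ∏ j ∈ Iᶜ, macdonaldKernel t (z i) (z j)) * gaugePhi q t n (shifted q I z) =
      gaugePhi q t n z * ∏ i ∈ I, ∏ j ∈ Iᶜ, macdonaldKernel (q * t⁻¹) (z i) (z j) := by
  have hne : ∀ i ∈ I, ∀ j ∈ Iᶜ, i ≠ j := fun i hi j hj hij => mem_compl.1 hj (hij ▸ hi)
  have hP : ∏ i ∈ I, ∏ j ∈ Iᶜ, gaugeFactor q t (z i) (z j) * gaugeFactor q t (z j) (z i) ≠ 0 :=
    prod_ne_zero_iff.2 fun i hi => prod_ne_zero_iff.2 fun j hj =>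
      have hij := hne i hi j hj
      mul_ne_zero (div_ne_zero (hpoch i j hij).1 (hpoch i j hij).2)
        (div_ne_zero (hpoch j i hij.symm).1 (hpoch j i hij.symm).2)
  refine mul_right_cancel₀ hP ?_
  calc _ = gaugePhi q t n z * ∏ i ∈ I, ∏ j ∈ Iᶜ, macdonaldKernel t (z i) (z j) *
        (gaugeFactor q t (q ^ 2 * z i) (z j) * gaugeFactor q t (z j) (q ^ 2 * z i)) := by
        rw [mul_assoc, gaugePhi_shifted_mul hq0]
        simp only [prod_mul_distrib]
        ring
    _ = gaugePhi q t n z * ∏ i ∈ I, ∏ j ∈ Iᶜ, macdonaldKernel (q * t⁻¹) (z i) (z j) *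
        (gaugeFactor q t (z i) (z j) * gaugeFactor q t (z j) (z i)) := by
        refine congrArg _ (prod_congr rfl fun i hi => prod_congr rfl fun j hj => ?_)
        have hij := hne i hi j hj
        exact macdonaldKernel_mul_gaugeFactor_shift hq hq0 ht (hz i) (hz j) (htz i j hij)
          (one_sub_ne_zero_of_qPoch_ne_zero hq (hpoch i j hij).2)
    _ = _ := by
        simp only [prod_mul_distrib]
        ring

theorem statement5_general (q t : ℂ) (hq : ‖q‖ < 1) (hq0 : q ≠ 0) (ht : t ≠ 0)
    (n r : ℕ)
    (f : (Fin n → ℂ) → ℂ) (z : Fin n → ℂ)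
    (hz : ∀ i, z i ≠ 0)
    (htz : ∀ i j, i ≠ j → t * z i - t⁻¹ * z j ≠ 0)
    (hpoch : ∀ (I : Finset (Fin n)) (j k : Fin n), j ≠ k →
      qPoch q (q * shifted q I z j / shifted q I z k) ≠ 0 ∧
      qPoch q (q ^ 2 * (t ^ 2)⁻¹ * shifted q I z j / shifted q I z k) ≠ 0) :
    macdonaldOp q t n r (fun w => gaugePhi q t n w * f w) z =
      gaugePhi q t n z * macdonaldOp q (q * t⁻¹) n r f z := by
  have hpoch₀ : ∀ j k, j ≠ k →
      qPoch q (q * z j / z k) ≠ 0 ∧ qPoch q (q ^ 2 * (t ^ 2)⁻¹ * z j / z k) ≠ 0 := by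
    simpa [shifted] using hpoch ∅
  rw [macdonaldOp_eq_sum, macdonaldOp_eq_sum, mul_sum]
  refine sum_congr rfl fun I _ => ?_
  rw [← mul_assoc, prod_macdonaldKernel_mul_gaugePhi_shifted hq hq0 ht hz htz hpoch₀ I, mul_assoc]

theorem statement5 (q t : ℂ) (hq : ‖q‖ < 1) (hq0 : q ≠ 0) (ht : t ≠ 0)
    (n r : ℕ) (hn : 1 ≤ n) (hr1 : 1 ≤ r) (hrn : r ≤ n)
    (f : (Fin n → ℂ) → ℂ) (z : Fin n → ℂ)
    (hz : ∀ i, z i ≠ 0)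
    (hzz : ∀ i j, i ≠ j → z i ≠ z j)
    (htz : ∀ i j, i ≠ j → t * z i - t⁻¹ * z j ≠ 0)
    (hpoch : ∀ (I : Finset (Fin n)) (j k : Fin n), j ≠ k →
      qPoch q (q * shifted q I z j / shifted q I z k) ≠ 0 ∧
      qPoch q (q ^ 2 * (t ^ 2)⁻¹ * shifted q I z j / shifted q I z k) ≠ 0) :
    macdonaldOp q t n r (fun w => gaugePhi q t n w * f w) z =
      gaugePhi q t n z * macdonaldOp q (q * t⁻¹) n r f z :=
  statement5_general q t hq hq0 ht n r f z hz htz hpoch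
end
end

section
/- Let $g \in \mathbb{C}$, $n \geq 2$, $1 \leq r \leq n$, and define the difference operators $D_r^{(g)} f(\boldsymbol{\lambda}) = \sum_{|I|=r} \prod_{i \in I, j \notin I} \frac{\lambda_i - \lambda_j + 2g}{\lambda_i - \lambda_j} f(\boldsymbol{\lambda} + 2 \mathbf{1}_I)$ and $\mathcal{H}_r^{(g)} f(\boldsymbol{\lambda}) = (-1)^{r(n-1)} \sum_{|I|=r} \prod_{i \in I, j \notin I} \frac{\lambda_i - \lambda_j + 2 - 2g}{\lambda_i - \lambda_j} f(\boldsymbol{\lambda} + 2\mathbf{1}_I)$, where $\boldsymbol{\lambda} + 2\mathbf{1}_I$ adds $2$ to $\lambda_i$ for each $i \in I$. Let $\varphi(\boldsymbol{\lambda}) = \prod_{p \neq q} \Gamma\big(\tfrac{\lambda_p - \lambda_q + 2 - 2g}{2}\big)$. Then for any function $f$ and any $\boldsymbol{\lambda}$ where all the quantities involved are defined and nonzero, $D_r^{(g)}\big(\varphi \cdot f\big)(\boldsymbol{\lambda}) = \varphi(\boldsymbol{\lambda}) \cdot \big(\mathcal{H}_r^{(g)} f\big)(\boldsymbol{\lambda})$.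 -/
/-!
Shifting `λ` by `2·1_I` only moves the Gamma factors of `φ` indexed by pairs with exactly one
index in `I`. For `p ∈ I`, `q ∉ I` the argument `x = (λ_p - λ_q + 2 - 2g)/2` becomes `x + 1`,
while the argument `(λ_q - λ_p + 2 - 2g)/2 = z + 1` of the reversed pair drops to
`z = -(λ_p - λ_q + 2g)/2`. By `Γ(s + 1) = s Γ(s)` the ratio `φ(λ + 2·1_I) / φ(λ)` is therefore
`∏_{p ∈ I, q ∉ I} -(λ_p - λ_q + 2 - 2g) / (λ_p - λ_q + 2g)`, which turns the coefficient of `D_r`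
into that of `𝓗_r` up to the sign `(-1)^{r(n-r)} = (-1)^{r(n-1)}`.
-/

open Finset

noncomputable section

/-- The point `λ + 2·1_I`, adding `2` to `λ_i` for each `i ∈ I`. -/
def shiftBy2 {n : ℕ} (I : Finset (Fin n)) (lam : Fin n → ℂ) : Fin n → ℂ :=
  fun k => lam k + if k ∈ I then 2 else 0

/-- The dual Sutherland Hamiltonian `D_r^{(g)}`. -/
def Dop (g : ℂ) (n r : ℕ) (f : (Fin n → ℂ) → ℂ) (lam : Fin n → ℂ) : ℂ :=
  ∑ I ∈ (univ : Finset (Fin n)).powersetCard r,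
    (∏ i ∈ I, ∏ j ∈ univ \ I, (lam i - lam j + 2 * g) / (lam i - lam j)) *
      f (shiftBy2 I lam)

/-- The operator `𝓗_r^{(g)} = (-1)^{r(n-1)} D_r^{(1-g)}`. -/
def Hop (g : ℂ) (n r : ℕ) (f : (Fin n → ℂ) → ℂ) (lam : Fin n → ℂ) : ℂ :=
  (-1) ^ (r * (n - 1)) *
    ∑ I ∈ (univ : Finset (Fin n)).powersetCard r,
      (∏ i ∈ I, ∏ j ∈ univ \ I, (lam i - lam j + 2 - 2 * g) / (lam i - lam j)) *
        f (shiftBy2 I lam)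

/-- `φ(λ) = ∏_{p ≠ q} Γ((λ_p - λ_q + 2 - 2g)/2)`. -/
def gaugeVarphi (g : ℂ) (n : ℕ) (lam : Fin n → ℂ) : ℂ :=
  ∏ p : Fin n, ∏ q ∈ univ.erase p,
    Complex.Gamma ((lam p - lam q + 2 - 2 * g) / 2)

lemma prod_prod_erase_ite_and {ι M : Type*} [Fintype ι] [DecidableEq ι] [CommMonoid M]
    {s t : Finset ι} (hst : Disjoint s t) (b : ι → ι → M) :
    ∏ p, ∏ q ∈ univ.erase p, (if p ∈ s ∧ q ∈ t then b p q else 1) =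
      ∏ p ∈ s, ∏ q ∈ t, b p q := by
  simp only [ite_and, prod_ite_irrel, prod_const_one, prod_ite_mem, univ_inter]
  refine prod_congr rfl fun p hp => ?_
  rw [erase_inter, univ_inter, erase_eq_of_notMem (disjoint_left.mp hst hp)]

lemma neg_one_pow_mul_sub {R : Type*} [Monoid R] [HasDistribNeg R] {r n : ℕ} (hrn : r ≤ n) :
    (-1 : R) ^ (r * (n - r)) = (-1) ^ (r * (n - 1)) := by
  have h : r * (n - 1) = r * (n - r) + r * (r - 1) := by
    rw [← Nat.mul_add]
    rcases r with _ | r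
    · simp
    · congr 1; omega
  rw [h, pow_add, (Nat.even_mul_pred_self r).neg_one_pow, mul_one]

lemma prod_prod_neg {ι κ M : Type*} [CommMonoid M] [HasDistribNeg M] (s : Finset ι)
    (t : Finset κ) (f : ι → κ → M) :
    ∏ i ∈ s, ∏ j ∈ t, -f i j = (-1) ^ (#s * #t) * ∏ i ∈ s, ∏ j ∈ t, f i j := by
  simp only [prod_neg, prod_mul_distrib, prod_const]
  rw [← pow_mul, Nat.mul_comm]

lemma shiftBy2_empty {n : ℕ} (lam : Fin n → ℂ) : shiftBy2 ∅ lam = lam := by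
  ext k
  simp [shiftBy2]

lemma shiftBy2_sub_of_mem_of_notMem {n : ℕ} {I : Finset (Fin n)} (lam : Fin n → ℂ) {p q : Fin n}
    (hp : p ∈ I) (hq : q ∉ I) : shiftBy2 I lam p - shiftBy2 I lam q = lam p - lam q + 2 := by
  simp only [shiftBy2, hp, hq, if_true, if_false]
  ring

lemma shiftBy2_sub_of_notMem_of_mem {n : ℕ} {I : Finset (Fin n)} (lam : Fin n → ℂ) {p q : Fin n}
    (hp : p ∉ I) (hq : q ∈ I) : shiftBy2 I lam p - shiftBy2 I lam q = lam p - lam q - 2 := by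
  simp only [shiftBy2, hp, hq, if_true, if_false]
  ring

lemma shiftBy2_sub_of_mem_iff {n : ℕ} {I : Finset (Fin n)} (lam : Fin n → ℂ) {p q : Fin n}
    (h : p ∈ I ↔ q ∈ I) : shiftBy2 I lam p - shiftBy2 I lam q = lam p - lam q := by
  by_cases hq : q ∈ I
  · simp only [shiftBy2, h.mpr hq, hq, if_true]
    ring
  · simp only [shiftBy2, mt h.mp hq, hq, if_false]
    ring

lemma ne_zero_of_Gamma_ne_zero {s : ℂ} (h : Complex.Gamma s ≠ 0) : s ≠ 0 := by
  rintro rfl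
  exact h Complex.Gamma_zero

lemma Gamma_shiftBy2_mul_ite (g : ℂ) {n : ℕ} (lam : Fin n → ℂ) (I : Finset (Fin n)) (p q : Fin n)
    (h₀ : Complex.Gamma ((lam p - lam q + 2 - 2 * g) / 2) ≠ 0)
    (h : Complex.Gamma ((shiftBy2 I lam p - shiftBy2 I lam q + 2 - 2 * g) / 2) ≠ 0) :
    Complex.Gamma ((shiftBy2 I lam p - shiftBy2 I lam q + 2 - 2 * g) / 2) *
        (if p ∉ I ∧ q ∈ I then (lam p - lam q - 2 * g) / 2 else 1) =
      Complex.Gamma ((lam p - lam q + 2 - 2 * g) / 2) *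
        (if p ∈ I ∧ q ∉ I then (lam p - lam q + 2 - 2 * g) / 2 else 1) := by
  by_cases hp : p ∈ I <;> by_cases hq : q ∈ I
  · simp [hp, hq, shiftBy2_sub_of_mem_iff lam (iff_of_true hp hq)]
  · have harg : (lam p - lam q + 2 + 2 - 2 * g) / 2 = (lam p - lam q + 2 - 2 * g) / 2 + 1 := by
      ring
    rw [shiftBy2_sub_of_mem_of_notMem lam hp hq, harg,
      Complex.Gamma_add_one _ (ne_zero_of_Gamma_ne_zero h₀)]
    simp [hp, hq, mul_comm]
  · have harg : (lam p - lam q - 2 + 2 - 2 * g) / 2 = (lam p - lam q - 2 * g) / 2 := by ring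
    have harg' : (lam p - lam q + 2 - 2 * g) / 2 = (lam p - lam q - 2 * g) / 2 + 1 := by ring
    rw [shiftBy2_sub_of_notMem_of_mem lam hp hq, harg] at h ⊢
    rw [harg', Complex.Gamma_add_one _ (ne_zero_of_Gamma_ne_zero h)]
    simp [hp, hq, mul_comm]
  · simp [hp, hq, shiftBy2_sub_of_mem_iff lam (iff_of_false hp hq)]

lemma gaugeVarphi_shiftBy2_mul (g : ℂ) {n : ℕ} (lam : Fin n → ℂ) (I : Finset (Fin n))
    (h₀ : ∀ p q, p ≠ q → Complex.Gamma ((lam p - lam q + 2 - 2 * g) / 2) ≠ 0)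
    (h : ∀ p q, p ≠ q →
      Complex.Gamma ((shiftBy2 I lam p - shiftBy2 I lam q + 2 - 2 * g) / 2) ≠ 0) :
    gaugeVarphi g n (shiftBy2 I lam) * ∏ i ∈ I, ∏ j ∈ univ \ I, (lam j - lam i - 2 * g) / 2 =
      gaugeVarphi g n lam * ∏ i ∈ I, ∏ j ∈ univ \ I, (lam i - lam j + 2 - 2 * g) / 2 := by
  rw [prod_comm,
    ← prod_prod_erase_ite_and sdiff_disjoint fun p q => (lam p - lam q - 2 * g) / 2,
    ← prod_prod_erase_ite_and disjoint_sdiff fun p q => (lam p - lam q + 2 - 2 * g) / 2,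
    gaugeVarphi, gaugeVarphi, ← prod_mul_distrib, ← prod_mul_distrib]
  refine prod_congr rfl fun p _ => ?_
  rw [← prod_mul_distrib, ← prod_mul_distrib]
  refine prod_congr rfl fun q hq => ?_
  have hpq : p ≠ q := (ne_of_mem_erase hq).symm
  simpa only [mem_sdiff, mem_univ, true_and] using
    Gamma_shiftBy2_mul_ite g lam I p q (h₀ p q hpq) (h p q hpq)

lemma prod_mul_gaugeVarphi_shiftBy2 (g : ℂ) {n : ℕ} (lam : Fin n → ℂ) (I : Finset (Fin n))
    (hG : ∀ (J : Finset (Fin n)) (p q : Fin n), p ≠ q →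
      Complex.Gamma ((shiftBy2 J lam p - shiftBy2 J lam q + 2 - 2 * g) / 2) ≠ 0) :
    (∏ i ∈ I, ∏ j ∈ univ \ I, (lam i - lam j + 2 * g) / (lam i - lam j)) *
        gaugeVarphi g n (shiftBy2 I lam) =
      (-1) ^ (#I * (n - 1)) * (gaugeVarphi g n lam *
        ∏ i ∈ I, ∏ j ∈ univ \ I, (lam i - lam j + 2 - 2 * g) / (lam i - lam j)) := by
  set B := ∏ i ∈ I, ∏ j ∈ univ \ I, (lam j - lam i - 2 * g) / 2
  have hφ := gaugeVarphi_shiftBy2_mul g lam I (by simpa [shiftBy2_empty] using hG ∅) (hG I)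
  have hB : B ≠ 0 := by
    refine prod_ne_zero_iff.mpr fun i hi => prod_ne_zero_iff.mpr fun j hj => ?_
    have hjI : j ∉ I := (mem_sdiff.mp hj).2
    have hΓ := hG I j i (ne_of_mem_of_not_mem hi hjI).symm
    rw [shiftBy2_sub_of_notMem_of_mem lam hjI hi] at hΓ
    convert ne_zero_of_Gamma_ne_zero hΓ using 1
    ring
  have hcard : #(univ \ I) = n - #I := by
    rw [card_sdiff_of_subset (subset_univ I), card_univ, Fintype.card_fin]
  -- per pair: `(d + 2g)/d · (d + 2 - 2g)/2 = -((d + 2 - 2g)/d) · (-d - 2g)/2`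
  have hpair : (∏ i ∈ I, ∏ j ∈ univ \ I, (lam i - lam j + 2 * g) / (lam i - lam j)) *
      ∏ i ∈ I, ∏ j ∈ univ \ I, (lam i - lam j + 2 - 2 * g) / 2 =
      (-1) ^ (#I * (n - #I)) *
        (∏ i ∈ I, ∏ j ∈ univ \ I, (lam i - lam j + 2 - 2 * g) / (lam i - lam j)) * B := by
    rw [← hcard, ← prod_prod_neg, ← prod_mul_distrib, ← prod_mul_distrib]
    refine prod_congr rfl fun i _ => ?_
    rw [← prod_mul_distrib, ← prod_mul_distrib]
    refine prod_congr rfl fun j _ => ?_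
    ring
  refine mul_right_cancel₀ hB ?_
  calc _ = (∏ i ∈ I, ∏ j ∈ univ \ I, (lam i - lam j + 2 * g) / (lam i - lam j)) *
          (gaugeVarphi g n (shiftBy2 I lam) * B) := mul_assoc _ _ _
    _ = _ := by
      rw [hφ, mul_left_comm, hpair,
        neg_one_pow_mul_sub (card_le_univ I |>.trans_eq (Fintype.card_fin n))]
      ring

theorem statement10_general (g : ℂ) (n r : ℕ)
    (f : (Fin n → ℂ) → ℂ) (lam : Fin n → ℂ)
    (hG : ∀ (I : Finset (Fin n)) (p q : Fin n), p ≠ q →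
      Complex.Gamma ((shiftBy2 I lam p - shiftBy2 I lam q + 2 - 2 * g) / 2) ≠ 0) :
    Dop g n r (fun w => gaugeVarphi g n w * f w) lam =
      gaugeVarphi g n lam * Hop g n r f lam := by
  rw [Dop, Hop, mul_sum, mul_sum]
  refine sum_congr rfl fun I hI => ?_
  rw [← mul_assoc, prod_mul_gaugeVarphi_shiftBy2 g lam I hG, (mem_powersetCard.mp hI).2]
  ring

theorem statement10 (g : ℂ) (n r : ℕ) (hn : 2 ≤ n) (hr1 : 1 ≤ r) (hrn : r ≤ n)
    (f : (Fin n → ℂ) → ℂ) (lam : Fin n → ℂ)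
    (hlam : ∀ i j, i ≠ j → lam i ≠ lam j)
    (hG : ∀ (I : Finset (Fin n)) (p q : Fin n), p ≠ q →
      Complex.Gamma ((shiftBy2 I lam p - shiftBy2 I lam q + 2 - 2 * g) / 2) ≠ 0)
    (hden : ∀ i j, i ≠ j → lam i - lam j + 2 * g ≠ 0) :
    Dop g n r (fun w => gaugeVarphi g n w * f w) lam =
      gaugeVarphi g n lam * Hop g n r f lam :=
  statement10_general g n r f lam hG
end
end
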